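/- Let p be an odd prime and let r be a unit modulo p². Then the hyper Kloosterman sum Kl_2(r; p²) is nonzero if and only if r is a quadratic residue modulo p, i.e., the Legendre symbol (r/p) equals 1. -/

import Mathlib

open scoped BigOperators

/-- `e(x) = exp(2πix)`. -/
noncomputable def e (x : ℂ) : ℂ := Complex.exp (2 * Real.pi * Complex.I * x)

/-- The hyper Kloosterman sum of dimension `d` and modulus `M` at a unit `r` mod `M`:
`Kl_d(r; M) = Σ_{n₁⋯n_d ≡ r (M)} e((n₁+⋯+n_d)/M)`. -/
noncomputable def Kl (d M : ℕ) (r : (ZMod M)ˣ) : ℂ :=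
  ∑ᶠ n : Fin d → (ZMod M)ˣ,
    if (∏ i, n i) = r then e (((∑ i, ((n i : ZMod M)).val : ℕ) : ℂ) / M) else 0

/-!
Write `ψ` for the standard additive character of `ZMod (p²)`, so that
`Kl₂(r; p²) = ∑ₐ ψ(a + r a⁻¹)`. Since `p² = 0` there, replacing `a` by `a (1 + p t)` shifts the
phase by `t p (a - r a⁻¹)`, and averaging over `t` keeps only the `a` with `a² ≡ r (mod p)`
(stationary phase). For a non-residue `r` nothing is left. Otherwise the phase is constant on
each of the two classes `a ≡ ±a₀ (mod p)` of solutions, so `Kl₂(r; p²) = N (ψ(F) + ψ(-F))` with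
`F = a₀ + r a₀⁻¹ ≡ 2a₀ (mod p)` and `N` the size of a class. This vanishes only if
`ψ(F)² = -1`, hence `ψ(4F) = 1`, `4F = 0` and `8a₀ ≡ 0 (mod p)`, which is impossible for odd `p`.
-/

open Finset

def klPhase {R : Type*} [CommRing R] (r : R) (a : Rˣ) : R := a + r * ↑a⁻¹

lemma klPhase_neg {R : Type*} [CommRing R] (r : R) (a : Rˣ) : klPhase r (-a) = -klPhase r a := by
  simp only [klPhase, Units.val_neg, inv_neg]
  ring

section SquareZero

variable {R : Type*} [CommRing R] {ε : R}

def unitOneAddMul (hε : ε ^ 2 = 0) (t : R) : Rˣ where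
  val := 1 + ε * t
  inv := 1 - ε * t
  val_inv := by linear_combination (-t ^ 2) * hε
  inv_val := by linear_combination (-t ^ 2) * hε

lemma klPhase_mul_unitOneAddMul (hε : ε ^ 2 = 0) (r : R) (a : Rˣ) (t : R) :
    klPhase r (a * unitOneAddMul hε t) = klPhase r a + t * (ε * (a - r * ↑a⁻¹)) := by
  simp only [klPhase, mul_inv_rev, Units.val_mul, unitOneAddMul, Units.inv_mk]
  ring

theorem sum_klPhase_eq_sum_filter [Fintype R] [DecidableEq R] {R' : Type*} [CommRing R']
    [IsDomain R'] [CharZero R'] {ψ : AddChar R R'} (hψ : ψ.IsPrimitive) (hε : ε ^ 2 = 0)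
    (r : R) :
    ∑ a : Rˣ, ψ (klPhase r a) =
      ∑ a ∈ univ.filter fun a : Rˣ => ε * (a - r * ↑a⁻¹) = 0, ψ (klPhase r a) := by
  refine mul_left_cancel₀ (Nat.cast_ne_zero.2 (Fintype.card_ne_zero (α := R))) ?_
  calc (Fintype.card R : R') * ∑ a : Rˣ, ψ (klPhase r a)
      = ∑ t : R, ∑ a : Rˣ, ψ (klPhase r (a * unitOneAddMul hε t)) := by
        rw [sum_congr rfl fun t _ => Fintype.sum_equiv (Equiv.mulRight (unitOneAddMul hε t))
          (fun a => ψ (klPhase r (a * unitOneAddMul hε t))) (fun a => ψ (klPhase r a))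
          fun _ => rfl, sum_const, card_univ, nsmul_eq_mul]
    _ = ∑ a : Rˣ, ψ (klPhase r a) * ∑ t : R, ψ (t * (ε * (a - r * ↑a⁻¹))) := by
        simp only [sum_comm (γ := R), klPhase_mul_unitOneAddMul, AddChar.map_add_eq_mul, mul_sum]
    _ = (Fintype.card R : R') *
          ∑ a ∈ univ.filter fun a : Rˣ => ε * (a - r * ↑a⁻¹) = 0, ψ (klPhase r a) := by
        simp only [AddChar.sum_mulShift _ hψ, mul_sum, sum_filter]
        refine sum_congr rfl fun a _ => ?_
        split_ifs <;> ring

end SquareZero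

lemma AddChar.map_four_nsmul_eq_one_of_add_map_neg_eq_zero {A R : Type*} [AddCommGroup A]
    [CommRing R] (ψ : AddChar A R) {x : A} (h : ψ x + ψ (-x) = 0) : ψ (4 • x) = 1 := by
  have hmul : ψ x * ψ (-x) = 1 := by
    rw [← ψ.map_add_eq_mul, add_neg_cancel, ψ.map_zero_eq_one]
  have hsq : ψ x ^ 2 = -1 := by linear_combination ψ x * h - hmul
  rw [ψ.map_nsmul_eq_pow, show ψ x ^ 4 = (ψ x ^ 2) ^ 2 by ring, hsq]
  norm_num

lemma Units.isSquare_iff_isSquare_val {M : Type*} [CommMonoid M] (u : Mˣ) :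
    IsSquare u ↔ IsSquare (u : M) := by
  refine ⟨fun ⟨v, hv⟩ => ⟨v, by rw [hv, Units.val_mul]⟩, fun ⟨x, hx⟩ => ?_⟩
  have hxu : IsUnit x :=
    IsUnit.of_mul_eq_one (a := x) (x * ↑u⁻¹) (by rw [← mul_assoc, ← hx, Units.mul_inv])
  exact ⟨hxu.unit, Units.ext (by rw [Units.val_mul, IsUnit.unit_spec, hx])⟩

lemma e_natCast_div (N : ℕ) [NeZero N] (n : ℕ) : e (n / N) = ZMod.stdAddChar (n : ZMod N) := by
  rw [ZMod.stdAddChar_apply, ZMod.toCircle_natCast, e, mul_div_assoc]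

theorem Kl_two_eq_sum_klPhase (M : ℕ) [NeZero M] (r : (ZMod M)ˣ) :
    Kl 2 M r = ∑ a : (ZMod M)ˣ, ZMod.stdAddChar (klPhase (r : ZMod M) a) := by
  rw [Kl, finsum_eq_sum_of_fintype, ← (finTwoArrowEquiv _).symm.sum_comp, Fintype.sum_prod_type]
  refine sum_congr rfl fun a _ => ?_
  simp only [finTwoArrowEquiv_symm_apply, Fin.prod_univ_two, Fin.sum_univ_two,
    Matrix.cons_val_zero, Matrix.cons_val_one, ← eq_inv_mul_iff_mul_eq,
    sum_ite_eq', mem_univ, if_true, e_natCast_div]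
  congr 1
  simp [klPhase, mul_comm]

section SquareModulus

variable {p : ℕ}

abbrev reduceUnits (p : ℕ) : (ZMod (p ^ 2))ˣ →* (ZMod p)ˣ :=
  ZMod.unitsMap (dvd_pow_self p two_ne_zero)

lemma natCast_sq_eq_zero : (p : ZMod (p ^ 2)) ^ 2 = 0 := by
  rw [← Nat.cast_pow, ZMod.natCast_self]

lemma reduceUnits_neg (a : (ZMod (p ^ 2))ˣ) : reduceUnits p (-a) = -reduceUnits p a :=
  Units.ext (by simp [ZMod.unitsMap_val, ZMod.cast_neg (dvd_pow_self p two_ne_zero)])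

variable [NeZero p]

lemma natCast_mul_eq_zero_iff {x : ZMod (p ^ 2)} :
    (p : ZMod (p ^ 2)) * x = 0 ↔ (x.cast : ZMod p) = 0 := by
  have hx : (p : ZMod (p ^ 2)) * x = ((p * x.val : ℕ) : ZMod (p ^ 2)) := by
    rw [Nat.cast_mul, ZMod.natCast_zmod_val]
  rw [hx, ZMod.natCast_eq_zero_iff, ZMod.cast_eq_val, ZMod.natCast_eq_zero_iff]
  generalize x.val = v
  rw [sq, Nat.mul_dvd_mul_iff_left (NeZero.pos p)]

lemma exists_eq_natCast_mul_of_cast_eq_zero {x : ZMod (p ^ 2)} (hx : (x.cast : ZMod p) = 0) :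
    ∃ t : ZMod (p ^ 2), x = (p : ZMod (p ^ 2)) * t := by
  rw [ZMod.cast_eq_val, ZMod.natCast_eq_zero_iff] at hx
  obtain ⟨m, hm⟩ := hx
  exact ⟨m, by rw [← ZMod.natCast_zmod_val x, hm, Nat.cast_mul]⟩

lemma natCast_mul_sub_eq_zero_iff (r a : (ZMod (p ^ 2))ˣ) :
    (p : ZMod (p ^ 2)) * ((a : ZMod (p ^ 2)) - (r : ZMod (p ^ 2)) * ↑a⁻¹) = 0 ↔
      reduceUnits p a ^ 2 = reduceUnits p r := by
  have hsub : ((a : ZMod (p ^ 2)) - r * ↑a⁻¹) = ((a : ZMod (p ^ 2)) ^ 2 - r) * ↑a⁻¹ := by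
    linear_combination (-(a : ZMod (p ^ 2))) * Units.mul_inv a
  rw [hsub, ← mul_assoc, Units.mul_left_eq_zero, natCast_mul_eq_zero_iff, Units.ext_iff,
    Units.val_pow_eq_pow_val, ZMod.unitsMap_val, ZMod.unitsMap_val,
    ZMod.cast_sub (dvd_pow_self p two_ne_zero), ZMod.cast_pow (dvd_pow_self p two_ne_zero),
    sub_eq_zero]

lemma exists_eq_mul_unitOneAddMul {a b : (ZMod (p ^ 2))ˣ}
    (h : reduceUnits p b = reduceUnits p a) :
    ∃ t, b = a * unitOneAddMul natCast_sq_eq_zero t := by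
  have hk : reduceUnits p (a⁻¹ * b) = 1 := by rw [map_mul, h, map_inv, inv_mul_cancel]
  have hcast : ((↑(a⁻¹ * b) - 1 : ZMod (p ^ 2)).cast : ZMod p) = 0 := by
    rw [ZMod.cast_sub (dvd_pow_self p two_ne_zero), ZMod.cast_one (dvd_pow_self p two_ne_zero),
      ← ZMod.unitsMap_val (dvd_pow_self p two_ne_zero), hk, Units.val_one, sub_self]
  obtain ⟨t, ht⟩ := exists_eq_natCast_mul_of_cast_eq_zero hcast
  have hu : a⁻¹ * b = unitOneAddMul natCast_sq_eq_zero t :=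
    Units.ext (by simp only [unitOneAddMul]; linear_combination ht)
  exact ⟨t, by rw [← hu, mul_inv_cancel_left]⟩

lemma klPhase_eq_of_reduceUnits_eq {r a b : (ZMod (p ^ 2))ˣ}
    (ha : reduceUnits p a ^ 2 = reduceUnits p r) (hb : reduceUnits p b = reduceUnits p a) :
    klPhase (r : ZMod (p ^ 2)) b = klPhase (r : ZMod (p ^ 2)) a := by
  obtain ⟨t, rfl⟩ := exists_eq_mul_unitOneAddMul hb
  rw [klPhase_mul_unitOneAddMul, (natCast_mul_sub_eq_zero_iff r a).2 ha, mul_zero, add_zero]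

theorem Kl_two_eq_sum_filter (r : (ZMod (p ^ 2))ˣ) :
    Kl 2 (p ^ 2) r = ∑ a ∈ univ.filter fun a => reduceUnits p a ^ 2 = reduceUnits p r,
      ZMod.stdAddChar (klPhase (r : ZMod (p ^ 2)) a) := by
  rw [Kl_two_eq_sum_klPhase,
    sum_klPhase_eq_sum_filter (ZMod.isPrimitive_stdAddChar _) natCast_sq_eq_zero]
  simp_rw [natCast_mul_sub_eq_zero_iff]

lemma sum_fiber_stdAddChar_klPhase {r a₀ : (ZMod (p ^ 2))ˣ}
    (h : reduceUnits p a₀ ^ 2 = reduceUnits p r) :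
    ∑ a ∈ univ.filter fun a => reduceUnits p a = reduceUnits p a₀,
      ZMod.stdAddChar (klPhase (r : ZMod (p ^ 2)) a) =
      #(univ.filter fun a => reduceUnits p a = reduceUnits p a₀) *
        ZMod.stdAddChar (klPhase (r : ZMod (p ^ 2)) a₀) := by
  rw [sum_congr rfl fun a ha => by rw [klPhase_eq_of_reduceUnits_eq h (mem_filter.1 ha).2],
    sum_const, nsmul_eq_mul]

theorem Kl_two_eq_zero_of_not_isSquare {r : (ZMod (p ^ 2))ˣ}
    (hr : ¬IsSquare (reduceUnits p r)) : Kl 2 (p ^ 2) r = 0 := by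
  rw [Kl_two_eq_sum_filter]
  refine sum_eq_zero fun a ha => absurd ⟨reduceUnits p a, ?_⟩ hr
  rw [← (mem_filter.1 ha).2, sq]

end SquareModulus

section OddPrimeSquare

variable {p : ℕ} [Fact p.Prime]

lemma two_ne_zero_of_odd (hodd : Odd p) : (2 : ZMod p) ≠ 0 := by
  refine Ring.two_ne_zero ?_
  rw [ZMod.ringChar_zmod_n]
  rintro rfl
  exact absurd hodd (by decide)

theorem Kl_two_eq_card_mul (hodd : Odd p) {r a₀ : (ZMod (p ^ 2))ˣ}
    (h : reduceUnits p a₀ ^ 2 = reduceUnits p r) :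
    Kl 2 (p ^ 2) r = #(univ.filter fun a => reduceUnits p a = reduceUnits p a₀) *
      (ZMod.stdAddChar (klPhase (r : ZMod (p ^ 2)) a₀) +
        ZMod.stdAddChar (-klPhase (r : ZMod (p ^ 2)) a₀)) := by
  have hneg : reduceUnits p (-a₀) ^ 2 = reduceUnits p r := by rw [← map_pow, neg_sq, map_pow, h]
  have hsplit : (univ.filter fun a => reduceUnits p a ^ 2 = reduceUnits p r) =
      (univ.filter fun a => reduceUnits p a = reduceUnits p a₀) ∪
        univ.filter fun a => reduceUnits p a = reduceUnits p (-a₀) := by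
    ext a
    simp only [mem_union, mem_filter, mem_univ, true_and, ← h, reduceUnits_neg,
      Units.sq_eq_sq_iff_eq_or_eq_neg]
  have hdisj : Disjoint (univ.filter fun a => reduceUnits p a = reduceUnits p a₀)
      (univ.filter fun a => reduceUnits p a = reduceUnits p (-a₀)) := by
    refine disjoint_filter.2 fun a _ ha ha' => ZMod.ne_neg_self hodd
      (reduceUnits p a₀).ne_zero ?_
    rw [← Units.val_neg, ← reduceUnits_neg, ← ha, ← ha']
  have hcard :=
    MonoidHom.card_fiber_eq_of_mem_range (reduceUnits p) ⟨-a₀, rfl⟩ ⟨a₀, rfl⟩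
  rw [Kl_two_eq_sum_filter, hsplit, sum_union hdisj, sum_fiber_stdAddChar_klPhase h,
    sum_fiber_stdAddChar_klPhase hneg, hcard, klPhase_neg, mul_add]

lemma stdAddChar_klPhase_add_neg_ne_zero (hodd : Odd p) {r a₀ : (ZMod (p ^ 2))ˣ}
    (h : reduceUnits p a₀ ^ 2 = reduceUnits p r) :
    ZMod.stdAddChar (klPhase (r : ZMod (p ^ 2)) a₀) +
      ZMod.stdAddChar (-klPhase (r : ZMod (p ^ 2)) a₀) ≠ 0 := by
  intro hsum
  have h4 : 4 • klPhase (r : ZMod (p ^ 2)) a₀ = 0 := ZMod.injective_stdAddChar <| by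
    rw [AddChar.map_four_nsmul_eq_one_of_add_map_neg_eq_zero _ hsum, AddChar.map_zero_eq_one]
  set x : ZMod p := (reduceUnits p a₀ : ZMod p)
  have hcast : ZMod.castHom (dvd_pow_self p two_ne_zero) (ZMod p)
      (4 • klPhase (r : ZMod (p ^ 2)) a₀) = 2 ^ 3 * x := by
    have ha : ((a₀ : ZMod (p ^ 2)).cast : ZMod p) = x := rfl
    have hr : ((r : ZMod (p ^ 2)).cast : ZMod p) = x ^ 2 := by
      rw [← ZMod.unitsMap_val (dvd_pow_self p two_ne_zero), ← h, Units.val_pow_eq_pow_val]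
    have hinv : ((↑a₀⁻¹ : ZMod (p ^ 2)).cast : ZMod p) * x = 1 := by
      rw [← ZMod.unitsMap_val (dvd_pow_self p two_ne_zero), ← Units.val_mul, map_inv,
        inv_mul_cancel, Units.val_one]
    rw [map_nsmul]
    simp only [klPhase, map_add, map_mul, ZMod.castHom_apply, ha, hr, nsmul_eq_mul]
    linear_combination (4 * x) * hinv
  rw [h4, map_zero, eq_comm] at hcast
  exact mul_ne_zero (pow_ne_zero 3 (two_ne_zero_of_odd hodd)) (reduceUnits p a₀).ne_zero hcast

theorem Kl_two_ne_zero_of_isSquare (hodd : Odd p) {r : (ZMod (p ^ 2))ˣ}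
    (hr : IsSquare (reduceUnits p r)) : Kl 2 (p ^ 2) r ≠ 0 := by
  obtain ⟨x, hx⟩ := hr
  obtain ⟨a₀, rfl⟩ := ZMod.unitsMap_surjective (dvd_pow_self p two_ne_zero) x
  have h : reduceUnits p a₀ ^ 2 = reduceUnits p r := by rw [hx, sq]
  rw [Kl_two_eq_card_mul hodd h]
  exact mul_ne_zero (Nat.cast_ne_zero.2 (card_ne_zero_of_mem (mem_filter.2 ⟨mem_univ _, rfl⟩)))
    (stdAddChar_klPhase_add_neg_ne_zero hodd h)

lemma legendreSym_val_eq_one_iff (r : (ZMod (p ^ 2))ˣ) :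
    legendreSym p ((r : ZMod (p ^ 2)).val : ℤ) = 1 ↔ IsSquare (reduceUnits p r) := by
  have hcast : (((r : ZMod (p ^ 2)).val : ℤ) : ZMod p) = (reduceUnits p r : ZMod p) := by
    rw [Int.cast_natCast, ZMod.unitsMap_val, ZMod.cast_eq_val]
  rw [legendreSym.eq_one_iff p (hcast ▸ (reduceUnits p r).ne_zero), hcast,
    Units.isSquare_iff_isSquare_val]

end OddPrimeSquare

theorem stmt2 (p : ℕ) [Fact p.Prime] (hodd : Odd p) (r : (ZMod (p ^ 2))ˣ) :
    Kl 2 (p ^ 2) r ≠ 0 ↔ legendreSym p ((r : ZMod (p ^ 2)).val : ℤ) = 1 := by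
  rw [legendreSym_val_eq_one_iff]
  exact ⟨not_imp_comm.1 Kl_two_eq_zero_of_not_isSquare, Kl_two_ne_zero_of_isSquare hodd⟩
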